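/- Let q ∈ (0,1), let J ≥ 1, and let μ₁, …, μ_J be real numbers, all nonzero. Define w(μ; λ) = (2/q) · Φ(−arcosh(λ · exp(μ²/2)/q) / |μ|), m = min_i {μ_i²/2}, and H(λ) = Σ_{i=1}^J w(μ_i; λ). If H(q·exp(−m)) ≥ J, then there exists a unique λ ≥ q·exp(−m) with H(λ) = J, and the weights w_i = w(μ_i; λ) satisfy 0 ≤ w_i ≤ 1/q, Σ_{i=1}^J w_i = J, and maximize the objective Σ_{i=1}^J [Φ(Φ⁻¹(q v_i/2) − μ_i) + Φ(Φ⁻¹(q v_i/2) + μ_i)] over all vectors v ∈ [0, 1/q]^J with Σ_{i=1}^J v_i = J. -/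

import Mathlib

/-!
Fix a multiplier `λ`. Maximizing `Σ power(vᵢ) - λ Σ vᵢ` separates into one problem per
coordinate. In the quantile variable `x = Φ⁻¹(q v / 2) ≤ 0` the coordinate objective is
`Φ(x - μ) + Φ(x + μ) - (2λ/q) Φ(x)`, whose derivative has the sign of
`cosh(μ x) - λ e^{μ²/2} / q`. Once `λ e^{μ²/2} / q ≥ 1` it therefore increases up to
`x = -arcosh(λ e^{μ²/2} / q) / |μ|`, which is the quantile of `w(μ; λ)`, and decreases afterwards;
`v = 0` corresponds to `x = -∞`, where the objective tends to `0`. Since `Σ vᵢ = Σ wᵢ = J`, the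
multiplier terms cancel.
For `λ ≥ q e^{-m}` every `arcosh` argument is at least `1`, and `H` is continuous, strictly
decreasing and tends to `0`, so `H(λ) = J` has exactly one solution there.
-/

/-- The standard normal cumulative distribution function. -/
noncomputable def Phi (x : ℝ) : ℝ :=
  ∫ t in Set.Iic x, (Real.sqrt (2 * Real.pi))⁻¹ * Real.exp (-t ^ 2 / 2)

/-- The inverse of the standard normal CDF, mapping (0,1) onto ℝ. -/
noncomputable def PhiInv : ℝ → ℝ := Function.invFun Phi

/-- The inverse hyperbolic cosine, defined on `[1, ∞)`. -/
noncomputable def arcosh (x : ℝ) : ℝ := Real.log (x + Real.sqrt (x ^ 2 - 1))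

/-- The candidate optimal weight `w(μ; λ) = (2/q) Φ(−arcosh(λ exp(μ²/2)/q)/|μ|)`. -/
noncomputable def optWeight (q μ lam : ℝ) : ℝ :=
  2 / q * Phi (-arcosh (lam * Real.exp (μ ^ 2 / 2) / q) / |μ|)

/-- The power of the level-`q v` two-sided Gaussian test at mean `μ`,
`Φ(Φ⁻¹(qv/2) − μ) + Φ(Φ⁻¹(qv/2) + μ)`, extended by continuity by `0` at `v = 0`. -/
noncomputable def twoSidedPower (q μ v : ℝ) : ℝ :=
  if v = 0 then 0 else Phi (PhiInv (q * v / 2) - μ) + Phi (PhiInv (q * v / 2) + μ)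

open MeasureTheory ProbabilityTheory Set Filter Topology

lemma gaussianPDFReal_zero_one (x : ℝ) :
    gaussianPDFReal 0 1 x = (√(2 * Real.pi))⁻¹ * Real.exp (-x ^ 2 / 2) := by
  simp [gaussianPDFReal]

lemma gaussianPDFReal_zero_one_neg (x : ℝ) : gaussianPDFReal 0 1 (-x) = gaussianPDFReal 0 1 x := by
  simp [gaussianPDFReal_zero_one]

lemma gaussianPDFReal_zero_one_sub_add (x a : ℝ) :
    gaussianPDFReal 0 1 (x - a) + gaussianPDFReal 0 1 (x + a) =
      2 * gaussianPDFReal 0 1 x * (Real.cosh (a * x) / Real.exp (a ^ 2 / 2)) := by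
  rw [gaussianPDFReal_zero_one, gaussianPDFReal_zero_one, gaussianPDFReal_zero_one, Real.cosh_eq,
    show -(x - a) ^ 2 / 2 = -x ^ 2 / 2 + a * x - a ^ 2 / 2 by ring,
    show -(x + a) ^ 2 / 2 = -x ^ 2 / 2 + -(a * x) - a ^ 2 / 2 by ring]
  simp only [Real.exp_add, Real.exp_sub]
  ring

section Phi

lemma Phi_eq_integral (x : ℝ) : Phi x = ∫ t in Iic x, gaussianPDFReal 0 1 t := by
  simp only [Phi, gaussianPDFReal_zero_one]

lemma Phi_eq_cdf : Phi = cdf (gaussianReal 0 1) := by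
  ext x
  rw [cdf_eq_real, measureReal_def, gaussianReal_apply_eq_integral _ one_ne_zero,
    ENNReal.toReal_ofReal (setIntegral_nonneg measurableSet_Iic fun t _ ↦
      gaussianPDFReal_nonneg 0 1 t), Phi_eq_integral]

lemma Phi_sub_Phi (a b : ℝ) : Phi b - Phi a = ∫ t in a..b, gaussianPDFReal 0 1 t := by
  simp only [Phi_eq_integral]
  exact intervalIntegral.integral_Iic_sub_Iic (integrable_gaussianPDFReal 0 1).integrableOn
    (integrable_gaussianPDFReal 0 1).integrableOn

lemma hasDerivAt_Phi (x : ℝ) : HasDerivAt Phi (gaussianPDFReal 0 1 x) x := by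
  have hcont : Continuous (gaussianPDFReal 0 1) := by
    simp only [gaussianPDFReal_def]; fun_prop
  have hFTC := intervalIntegral.integral_hasDerivAt_right
    (integrable_gaussianPDFReal 0 1).intervalIntegrable (a := 0) (b := x)
    (hcont.stronglyMeasurableAtFilter _ _) hcont.continuousAt
  refine (hFTC.const_add (Phi 0)).congr_of_eventuallyEq (Eventually.of_forall fun y ↦ ?_)
  linarith [Phi_sub_Phi 0 y]

lemma continuous_Phi : Continuous Phi :=
  continuous_iff_continuousAt.2 fun x ↦ (hasDerivAt_Phi x).continuousAt

lemma Phi_strictMono : StrictMono Phi := fun a b hab ↦ by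
  have : 0 < ∫ t in a..b, gaussianPDFReal 0 1 t :=
    intervalIntegral.intervalIntegral_pos_of_pos_on
      (integrable_gaussianPDFReal 0 1).intervalIntegrable
      (fun t _ ↦ gaussianPDFReal_pos 0 1 t one_ne_zero) hab
  linarith [Phi_sub_Phi a b]

lemma tendsto_Phi_atBot : Tendsto Phi atBot (𝓝 0) := Phi_eq_cdf ▸ tendsto_cdf_atBot _

lemma tendsto_Phi_atTop : Tendsto Phi atTop (𝓝 1) := Phi_eq_cdf ▸ tendsto_cdf_atTop _

lemma Phi_pos (x : ℝ) : 0 < Phi x :=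
  (Phi_eq_cdf ▸ cdf_nonneg _ _ : 0 ≤ Phi (x - 1)).trans_lt (Phi_strictMono (sub_one_lt x))

lemma Phi_neg (x : ℝ) : Phi (-x) = 1 - Phi x := by
  have hint := (integrable_gaussianPDFReal 0 1).integrableOn (s := Iic x)
  have htotal := intervalIntegral.integral_Iic_add_Ioi hint
    (integrable_gaussianPDFReal 0 1).integrableOn
  rw [integral_gaussianPDFReal_eq_one 0 one_ne_zero] at htotal
  rw [Phi_eq_integral, Phi_eq_integral, ← neg_neg x, ← integral_comp_neg_Ioi]
  simp only [gaussianPDFReal_zero_one_neg, neg_neg]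
  linarith

lemma Phi_zero : Phi 0 = 1 / 2 := by
  have h := Phi_neg 0
  rw [neg_zero] at h
  linarith

lemma Phi_PhiInv {u : ℝ} (hu : u ∈ Ioo (0 : ℝ) 1) : Phi (PhiInv u) = u :=
  Function.invFun_eq <| mem_range_of_exists_le_of_exists_ge continuous_Phi
    ((tendsto_Phi_atBot.eventually_lt_const hu.1).exists.imp fun _ ↦ le_of_lt)
    ((tendsto_Phi_atTop.eventually_const_lt hu.2).exists.imp fun _ ↦ le_of_lt)

lemma PhiInv_Phi (x : ℝ) : PhiInv (Phi x) = x :=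
  Function.leftInverse_invFun Phi_strictMono.injective x

lemma PhiInv_nonpos {u : ℝ} (hu : u ∈ Ioc (0 : ℝ) (1 / 2)) : PhiInv u ≤ 0 := by
  rw [← Phi_strictMono.le_iff_le, Phi_PhiInv ⟨hu.1, hu.2.trans_lt (by norm_num)⟩, Phi_zero]
  exact hu.2

end Phi

section Arcosh

lemma neg_arcosh_div_abs_nonpos {c : ℝ} (hc : 1 ≤ c) (μ : ℝ) : -Real.arcosh c / |μ| ≤ 0 :=
  div_nonpos_of_nonpos_of_nonneg (neg_nonpos.2 (Real.arcosh_nonneg hc)) (abs_nonneg μ)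

lemma continuousOn_real_arcosh_Ioi : ContinuousOn Real.arcosh (Ioi 0) :=
  Real.continuousOn_log.comp (by fun_prop) fun x (hx : 0 < x) ↦
    (add_pos_of_pos_of_nonneg hx (Real.sqrt_nonneg (x ^ 2 - 1))).ne'

lemma tendsto_real_arcosh_atTop : Tendsto Real.arcosh atTop atTop := by
  refine tendsto_atTop_mono' _ ?_ Real.tendsto_log_atTop
  filter_upwards [eventually_gt_atTop 0] with x hx
  exact Real.log_le_log hx (le_add_of_nonneg_right (Real.sqrt_nonneg _))

lemma le_cosh_mul_iff {μ c x : ℝ} (hμ : μ ≠ 0) (hc : 1 ≤ c) (hx : x ≤ 0) :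
    c ≤ Real.cosh (μ * x) ↔ x ≤ -Real.arcosh c / |μ| := by
  conv_lhs => rw [← Real.cosh_arcosh hc]
  rw [Real.cosh_le_cosh, abs_of_nonneg (Real.arcosh_nonneg hc), abs_mul, abs_of_nonpos hx,
    le_div_iff₀ (abs_pos.2 hμ)]
  constructor <;> intro h <;> linarith

end Arcosh

section Lagrangian

/-- The Lagrangian `twoSidedPower q μ v - λ v` in the quantile variable `x = Φ⁻¹(q v / 2)`,
with the multiplier encoded as `c = λ e^{μ²/2} / q`. -/
noncomputable def lagrangian (μ c x : ℝ) : ℝ :=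
  Phi (x - μ) + Phi (x + μ) - 2 * c / Real.exp (μ ^ 2 / 2) * Phi x

variable {μ c : ℝ}

lemma hasDerivAt_lagrangian (x : ℝ) : HasDerivAt (lagrangian μ c)
    (2 * gaussianPDFReal 0 1 x * ((Real.cosh (μ * x) - c) / Real.exp (μ ^ 2 / 2))) x := by
  have h := (((hasDerivAt_Phi (x - μ)).comp x ((hasDerivAt_id x).sub_const μ)).add
    ((hasDerivAt_Phi (x + μ)).comp x ((hasDerivAt_id x).add_const μ))).sub
    ((hasDerivAt_Phi x).const_mul (2 * c / Real.exp (μ ^ 2 / 2)))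
  refine (h : HasDerivAt (lagrangian μ c) _ x).congr_deriv ?_
  rw [mul_one, mul_one, gaussianPDFReal_zero_one_sub_add]
  ring

lemma continuous_lagrangian : Continuous (lagrangian μ c) :=
  continuous_iff_continuousAt.2 fun x ↦ (hasDerivAt_lagrangian x).continuousAt

lemma tendsto_lagrangian_atBot : Tendsto (lagrangian μ c) atBot (𝓝 0) := by
  have h := ((tendsto_Phi_atBot.comp (tendsto_atBot_add_const_right _ (-μ) tendsto_id)).add
    (tendsto_Phi_atBot.comp (tendsto_atBot_add_const_right _ μ tendsto_id))).sub
    (tendsto_Phi_atBot.const_mul (2 * c / Real.exp (μ ^ 2 / 2)))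
  rw [show (0 : ℝ) = 0 + 0 - 2 * c / Real.exp (μ ^ 2 / 2) * 0 by ring]
  exact h.congr fun x ↦ by simp [lagrangian, sub_eq_add_neg]

variable (hμ : μ ≠ 0) (hc : 1 ≤ c)
include hμ hc

lemma monotoneOn_lagrangian : MonotoneOn (lagrangian μ c) (Iic (-Real.arcosh c / |μ|)) := by
  refine monotoneOn_of_hasDerivWithinAt_nonneg (convex_Iic _) continuous_lagrangian.continuousOn
    (fun x _ ↦ (hasDerivAt_lagrangian x).hasDerivWithinAt) fun x hx ↦ ?_
  rw [interior_Iic] at hx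
  have hx0 : x ≤ 0 := hx.le.trans (neg_arcosh_div_abs_nonpos hc μ)
  have := gaussianPDFReal_pos 0 1 x one_ne_zero
  have := sub_nonneg.2 ((le_cosh_mul_iff hμ hc hx0).2 hx.le)
  positivity

lemma antitoneOn_lagrangian : AntitoneOn (lagrangian μ c) (Icc (-Real.arcosh c / |μ|) 0) := by
  refine antitoneOn_of_hasDerivWithinAt_nonpos (convex_Icc _ _) continuous_lagrangian.continuousOn
    (fun x _ ↦ (hasDerivAt_lagrangian x).hasDerivWithinAt) fun x hx ↦ ?_
  rw [interior_Icc] at hx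
  have hcosh : Real.cosh (μ * x) ≤ c := by
    by_contra! h
    exact hx.1.not_ge ((le_cosh_mul_iff hμ hc hx.2.le).1 h.le)
  have := gaussianPDFReal_pos 0 1 x one_ne_zero
  have := div_nonpos_of_nonpos_of_nonneg (sub_nonpos.2 hcosh) (Real.exp_pos (μ ^ 2 / 2)).le
  nlinarith

lemma lagrangian_le_lagrangian_argmax {x : ℝ} (hx : x ≤ 0) :
    lagrangian μ c x ≤ lagrangian μ c (-Real.arcosh c / |μ|) := by
  rcases le_total x (-Real.arcosh c / |μ|) with h | h
  · exact monotoneOn_lagrangian hμ hc h (mem_Iic.2 le_rfl) h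
  · exact antitoneOn_lagrangian hμ hc ⟨le_rfl, neg_arcosh_div_abs_nonpos hc μ⟩ ⟨h, hx⟩ h

lemma lagrangian_argmax_nonneg : 0 ≤ lagrangian μ c (-Real.arcosh c / |μ|) :=
  le_of_tendsto tendsto_lagrangian_atBot <| (eventually_le_atBot 0).mono fun _ hx ↦
    lagrangian_le_lagrangian_argmax hμ hc hx

end Lagrangian

section OptWeight

lemma optWeight_eq (q μ : ℝ) : optWeight q μ =
    fun lam ↦ 2 / q * Phi (-Real.arcosh (lam * Real.exp (μ ^ 2 / 2) / q) / |μ|) := rfl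

variable {q μ lam : ℝ}

lemma one_le_mul_exp_div_of_le (hq : 0 < q) {m : ℝ} (hm : m ≤ μ ^ 2 / 2)
    (hlam : q * Real.exp (-m) ≤ lam) : 1 ≤ lam * Real.exp (μ ^ 2 / 2) / q := by
  rw [le_div_iff₀ hq, one_mul]
  calc q = q * Real.exp (-m) * Real.exp m := by simp [mul_assoc, ← Real.exp_add]
    _ ≤ lam * Real.exp (μ ^ 2 / 2) := by gcongr; exact hlam.trans' (by positivity)

lemma optWeight_mem_Icc (hq : 0 < q) (hc : 1 ≤ lam * Real.exp (μ ^ 2 / 2) / q) :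
    optWeight q μ lam ∈ Icc (0 : ℝ) (1 / q) := by
  simp only [optWeight_eq]
  have hPhi := (Phi_strictMono.monotone (neg_arcosh_div_abs_nonpos hc μ)).trans_eq Phi_zero
  have := Phi_pos (-Real.arcosh (lam * Real.exp (μ ^ 2 / 2) / q) / |μ|)
  refine ⟨by positivity, ?_⟩
  calc _ ≤ 2 / q * (1 / 2) := by gcongr
    _ = 1 / q := by ring

lemma twoSidedPower_optWeight_sub (hq : 0 < q) :
    twoSidedPower q μ (optWeight q μ lam) - lam * optWeight q μ lam =
      lagrangian μ (lam * Real.exp (μ ^ 2 / 2) / q)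
        (-Real.arcosh (lam * Real.exp (μ ^ 2 / 2) / q) / |μ|) := by
  set ζ := -Real.arcosh (lam * Real.exp (μ ^ 2 / 2) / q) / |μ|
  have hw : optWeight q μ lam = 2 / q * Phi ζ := by rw [optWeight_eq]
  have hPhi := Phi_pos ζ
  have hlevel : q * optWeight q μ lam / 2 = Phi ζ := by rw [hw]; field_simp
  rw [twoSidedPower, if_neg (by rw [hw]; positivity), hlevel, PhiInv_Phi, hw, lagrangian]
  field_simp

lemma twoSidedPower_sub_eq_lagrangian (hq : 0 < q) {v : ℝ} (hv : v ∈ Ioc (0 : ℝ) (1 / q)) :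
    twoSidedPower q μ v - lam * v =
      lagrangian μ (lam * Real.exp (μ ^ 2 / 2) / q) (PhiInv (q * v / 2)) := by
  have hqv : q * v ≤ 1 := by rw [← le_div_iff₀' hq]; exact hv.2
  have hv0 := hv.1
  rw [twoSidedPower, if_neg hv0.ne', lagrangian, Phi_PhiInv ⟨by positivity, by linarith⟩]
  field_simp

lemma twoSidedPower_sub_mul_le (hq : 0 < q) (hμ : μ ≠ 0)
    (hc : 1 ≤ lam * Real.exp (μ ^ 2 / 2) / q) {v : ℝ} (hv : v ∈ Icc (0 : ℝ) (1 / q)) :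
    twoSidedPower q μ v - lam * v ≤
      twoSidedPower q μ (optWeight q μ lam) - lam * optWeight q μ lam := by
  rw [twoSidedPower_optWeight_sub hq]
  rcases hv.1.eq_or_lt with rfl | hv0
  · simpa [twoSidedPower] using lagrangian_argmax_nonneg hμ hc
  · have hqv : q * v ≤ 1 := by rw [← le_div_iff₀' hq]; exact hv.2
    rw [twoSidedPower_sub_eq_lagrangian hq ⟨hv0, hv.2⟩]
    exact lagrangian_le_lagrangian_argmax hμ hc (PhiInv_nonpos ⟨by positivity, by linarith⟩)

lemma optWeight_strictAntiOn (hq : 0 < q) (hμ : μ ≠ 0) : StrictAntiOn (optWeight q μ) (Ioi 0) := by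
  intro l₁ (h₁ : 0 < l₁) l₂ (h₂ : 0 < l₂) h
  have harcosh := (Real.arcosh_lt_arcosh (by positivity) (by positivity)).2
    (div_lt_div_of_pos_right (mul_lt_mul_of_pos_right h (Real.exp_pos (μ ^ 2 / 2))) hq)
  have := Phi_strictMono (div_lt_div_of_pos_right (neg_lt_neg harcosh) (abs_pos.2 hμ))
  simp only [optWeight_eq]
  gcongr

lemma continuousOn_optWeight (hq : 0 < q) : ContinuousOn (optWeight q μ) (Ioi 0) := by
  have hmaps : MapsTo (fun lam ↦ lam * Real.exp (μ ^ 2 / 2) / q) (Ioi 0) (Ioi 0) :=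
    fun lam (hlam : 0 < lam) ↦ show 0 < lam * Real.exp (μ ^ 2 / 2) / q by positivity
  rw [optWeight_eq]
  exact (continuous_Phi.comp_continuousOn
    ((continuousOn_real_arcosh_Ioi.comp (by fun_prop) hmaps).neg.div_const _)).const_smul (2 / q)

lemma tendsto_optWeight_atTop (hq : 0 < q) (hμ : μ ≠ 0) :
    Tendsto (optWeight q μ) atTop (𝓝 0) := by
  have harg : Tendsto (fun lam ↦ lam * Real.exp (μ ^ 2 / 2) / q) atTop atTop := by
    simp only [mul_div_assoc]
    exact tendsto_id.atTop_mul_const (by positivity)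
  have hζ := (tendsto_neg_atTop_atBot.comp (tendsto_real_arcosh_atTop.comp harg)).atBot_div_const
    (abs_pos.2 hμ)
  have h := (tendsto_Phi_atBot.comp hζ).const_mul (2 / q)
  rw [mul_zero] at h
  rw [optWeight_eq]
  exact h

end OptWeight

lemma existsUnique_eq_of_strictAntiOn_Ici {α β : Type*} [ConditionallyCompleteLinearOrder α]
    [TopologicalSpace α] [OrderTopology α] [DenselyOrdered α] [LinearOrder β] [TopologicalSpace β]
    [OrderClosedTopology β] {f : α → β} {a b : α} {y : β} (hf : StrictAntiOn f (Ici a))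
    (hcont : ContinuousOn f (Ici a)) (ha : y ≤ f a) (hab : a ≤ b) (hb : f b < y) :
    ∃! x, a ≤ x ∧ f x = y := by
  obtain ⟨x, hx, hfx⟩ :=
    intermediate_value_Icc' hab (hcont.mono Icc_subset_Ici_self) ⟨hb.le, ha⟩
  exact ⟨x, ⟨hx.1, hfx⟩, fun x' hx' ↦ hf.injOn hx'.1 hx.1 (hx'.2.trans hfx.symm)⟩

lemma Finset.sum_le_sum_of_sub_mul_le {ι R : Type*} [CommRing R] [PartialOrder R]
    [IsOrderedAddMonoid R] (s : Finset ι) {f : ι → R → R} {lam : R} {v w : ι → R}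
    (h : ∀ i ∈ s, f i (v i) - lam * v i ≤ f i (w i) - lam * w i)
    (hvw : ∑ i ∈ s, v i = ∑ i ∈ s, w i) :
    ∑ i ∈ s, f i (v i) ≤ ∑ i ∈ s, f i (w i) := by
  have := Finset.sum_le_sum h
  rwa [Finset.sum_sub_distrib, Finset.sum_sub_distrib, ← Finset.mul_sum, ← Finset.mul_sum, hvw,
    sub_le_sub_iff_right] at this

theorem stmt_9_general (q : ℝ) (hq : q ∈ Set.Ioo (0 : ℝ) 1) (J : ℕ) (hJ : 1 ≤ J)
    (μ : Fin J → ℝ) (hμ : ∀ i, μ i ≠ 0)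
    (m : ℝ) (hm_le : ∀ i, m ≤ (μ i) ^ 2 / 2)
    (hH : (J : ℝ) ≤ ∑ i, optWeight q (μ i) (q * Real.exp (-m))) :
    (∃! lam : ℝ, q * Real.exp (-m) ≤ lam ∧ ∑ i, optWeight q (μ i) lam = J) ∧
    (∀ lam : ℝ, q * Real.exp (-m) ≤ lam → (∑ i, optWeight q (μ i) lam = J) →
      (∀ i, optWeight q (μ i) lam ∈ Set.Icc (0 : ℝ) (1 / q)) ∧
      (∀ v : Fin J → ℝ, (∀ i, v i ∈ Set.Icc (0 : ℝ) (1 / q)) → (∑ i, v i = J) →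
        ∑ i, twoSidedPower q (μ i) (v i) ≤
          ∑ i, twoSidedPower q (μ i) (optWeight q (μ i) lam))) := by
  obtain ⟨hq, -⟩ := hq
  set a := q * Real.exp (-m)
  have ha : 0 < a := by positivity
  have hne : (Finset.univ : Finset (Fin J)).Nonempty := Finset.univ_nonempty_iff.2 ⟨⟨0, hJ⟩⟩
  have hanti : StrictAntiOn (fun lam ↦ ∑ i, optWeight q (μ i) lam) (Ici a) :=
    fun l₁ h₁ l₂ h₂ h ↦ Finset.sum_lt_sum_of_nonempty hne fun i _ ↦
      optWeight_strictAntiOn hq (hμ i) (ha.trans_le h₁) (ha.trans_le h₂) h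
  have hcont : ContinuousOn (fun lam ↦ ∑ i, optWeight q (μ i) lam) (Ici a) :=
    continuousOn_finsetSum _ fun i _ ↦ (continuousOn_optWeight hq).mono fun _ h ↦ ha.trans_le h
  have hlim : ∀ᶠ lam in atTop, ∑ i, optWeight q (μ i) lam < J := by
    have h := tendsto_finsetSum Finset.univ fun i _ ↦ tendsto_optWeight_atTop hq (hμ i)
    rw [Finset.sum_const_zero] at h
    exact h.eventually_lt_const (by exact_mod_cast hJ)
  obtain ⟨b, hb, hab⟩ := (hlim.and (eventually_ge_atTop a)).exists
  refine ⟨existsUnique_eq_of_strictAntiOn_Ici hanti hcont hH hab hb, fun lam hlam hsum ↦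
    ⟨fun i ↦ optWeight_mem_Icc hq (one_le_mul_exp_div_of_le hq (hm_le i) hlam), fun v hv hvsum ↦ ?_⟩⟩
  exact Finset.sum_le_sum_of_sub_mul_le _ (fun i _ ↦ twoSidedPower_sub_mul_le hq (hμ i)
    (one_le_mul_exp_div_of_le hq (hm_le i) hlam) (hv i)) (hvsum.trans hsum.symm)

/-- Explicit optimal weights for two-sided Gaussian tests: with `m = min μᵢ²/2` and
`H(λ) = Σᵢ w(μᵢ; λ)`, if all `μᵢ ≠ 0` and `H(q e^{−m}) ≥ J`, then there is a unique
`λ ≥ q e^{−m}` with `H(λ) = J`, and the weights `wᵢ = w(μᵢ; λ)` lie in `[0, 1/q]`,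
sum to `J`, and maximize the average two-sided power over all feasible weight vectors. -/
theorem stmt_9 (q : ℝ) (hq : q ∈ Set.Ioo (0 : ℝ) 1) (J : ℕ) (hJ : 1 ≤ J)
    (μ : Fin J → ℝ) (hμ : ∀ i, μ i ≠ 0)
    (m : ℝ) (hm_le : ∀ i, m ≤ (μ i) ^ 2 / 2) (hm_eq : ∃ i, m = (μ i) ^ 2 / 2)
    (hH : (J : ℝ) ≤ ∑ i, optWeight q (μ i) (q * Real.exp (-m))) :
    (∃! lam : ℝ, q * Real.exp (-m) ≤ lam ∧ ∑ i, optWeight q (μ i) lam = J) ∧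
    (∀ lam : ℝ, q * Real.exp (-m) ≤ lam → (∑ i, optWeight q (μ i) lam = J) →
      (∀ i, optWeight q (μ i) lam ∈ Set.Icc (0 : ℝ) (1 / q)) ∧
      (∀ v : Fin J → ℝ, (∀ i, v i ∈ Set.Icc (0 : ℝ) (1 / q)) → (∑ i, v i = J) →
        ∑ i, twoSidedPower q (μ i) (v i) ≤
          ∑ i, twoSidedPower q (μ i) (optWeight q (μ i) lam))) :=
  stmt_9_general q hq J hJ μ hμ m hm_le hH
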